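/- If two groups have equal FPR, equal FNR (with FNR < 1 or FPR > 0 so that PPVs are well-defined), and equal PPVs, then their base rates are equal: p_a = p_b. Equivalently, if base rates differ, equalized odds implies PPVs differ. -/

import Mathlib

/-- if two groups have equal FPR, equal FNR, and equal PPV
(with each group's classifier nontrivially imperfect: `FPR > 0` and `FNR < 1`),
then their base rates are equal.  Here
`PPV_d = p_d(1−FNR_d) / (p_d(1−FNR_d) + (1−p_d)FPR_d)`. -/
theorem equal_rates_and_ppv_implies_equal_base_rates
    (pa pb FPRa FPRb FNRa FNRb : ℝ)
    (hpa : 0 < pa) (hpa' : pa < 1) (hpb : 0 < pb) (hpb' : pb < 1)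
    (hFPRa : 0 ≤ FPRa) (hFPRa' : FPRa ≤ 1) (hFPRb : 0 ≤ FPRb) (hFPRb' : FPRb ≤ 1)
    (hFNRa : 0 ≤ FNRa) (hFNRa' : FNRa ≤ 1) (hFNRb : 0 ≤ FNRb) (hFNRb' : FNRb ≤ 1)
    -- nontrivial imperfect classifiers:
    (hFPRapos : 0 < FPRa) (hFNRalt : FNRa < 1)
    (hFPRbpos : 0 < FPRb) (hFNRblt : FNRb < 1)
    -- equalized odds:
    (hFPR : FPRa = FPRb) (hFNR : FNRa = FNRb)
    -- equal PPVs: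
    (hPPV : pa * (1 - FNRa) / (pa * (1 - FNRa) + (1 - pa) * FPRa)
          = pb * (1 - FNRb) / (pb * (1 - FNRb) + (1 - pb) * FPRb)) :
    pa = pb := by
  subst hFPR hFNR
  have ha : 0 < pa * (1 - FNRa) + (1 - pa) * FPRa := by nlinarith
  have hb : 0 < pb * (1 - FNRa) + (1 - pb) * FPRa := by nlinarith
  rw [div_eq_div_iff (ne_of_gt ha) (ne_of_gt hb)] at hPPV
  nlinarith [mul_pos hFPRapos (sub_pos.2 hFNRalt)]
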